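/- Let β > 1, ℓ ∈ ℝ, q ∈ [0,1], and ε₁ = ε₂ = ε > 0. For a finite multiset y of reals let f_i(y) = |{u ∈ y : u − ℓ + 1 < β^i}| − q·|y| for i ≥ 1. Let x and x' be finite multisets of reals such that one is obtained from the other by adding a single element. For k ≥ 1 let P_x(k) be the probability, under independent noise v₀ drawn from the exponential distribution of scale 1/ε₁ and v₁, …, v_k each drawn from the exponential distribution of scale 1/ε₂, of the event {f_i(x) + v_i < v₀ for all 1 ≤ i ≤ k−1, and f_k(x) + v_k ≥ v₀}, and P_{x'}(k) likewise with x' in place of x. Then for every k ≥ 1: P_x(k) ≤ exp(q·ε₁ + ε₂)·P_{x'}(k). (The unbounded quantile mechanism with ε₁ = ε₂ is (qε₁ + ε₂)-DP under the add-subtract definition of neighbors.) -/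

import Mathlib

open MeasureTheory Real
open scoped Classical ENNReal

/-- The exponential distribution with scale `b`: density `z ↦ (1/b)·exp(−z/b)` for `z ≥ 0`
(and `0` for `z < 0`) with respect to Lebesgue measure. -/
noncomputable def expDist (b : ℝ) : Measure ℝ :=
  volume.withDensity fun z =>
    ENNReal.ofReal (if 0 ≤ z then (1 / b) * Real.exp (-(z / b)) else 0)

/-- The recentered counting queries of the unbounded quantile mechanism for quantile `q`:
`f_i(y) = |{u ∈ y : u − ℓ + 1 < β^i}| − q·|y|`. -/
noncomputable def quantileQuery (β ℓ q : ℝ) (i : ℕ) (y : Multiset ℝ) : ℝ :=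
  ((y.filter fun u => u - ℓ + 1 < β ^ i).card : ℝ) - q * (Multiset.card y : ℝ)

/-- The event that `AboveThreshold` with threshold `0` and query values `a 1, a 2, …` halts
exactly at query `k`: coordinates `v 0, v 1, …, v k` are the noise on the threshold and on
queries `1, …, k`. -/
def haltEvent (a : ℕ → ℝ) (k : ℕ) : Set (Fin (k + 1) → ℝ) :=
  {v | (∀ i : Fin (k + 1), 1 ≤ (i : ℕ) → (i : ℕ) < k → a i + v i < v 0) ∧
       v 0 ≤ a k + v (Fin.last k)}

section Aux

open scoped ENNReal

lemma lintegral_pi_prod : ∀ (n : ℕ) (f : Fin n → ℝ → ℝ≥0∞), (∀ i, Measurable (f i)) →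
    ∫⁻ v : Fin n → ℝ, ∏ i, f i (v i) ∂(Measure.pi fun _ => volume) = ∏ i, ∫⁻ z, f i z := by
  intro n
  induction n with
  | zero =>
    intro f hf
    simp [Measure.pi_empty_univ]
  | succ n ih =>
    intro f hf
    have mp := measurePreserving_piFinSuccAbove (fun _ : Fin (n+1) => (volume : Measure ℝ)) 0
    have hF : Measurable (fun p : ℝ × (Fin n → ℝ) => f 0 p.1 * ∏ j : Fin n, f j.succ (p.2 j)) := by
      refine ((hf 0).comp measurable_fst).mul ?_
      exact Finset.measurable_prod _ fun j _ =>
        (hf j.succ).comp ((measurable_pi_apply j).comp measurable_snd)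
    calc ∫⁻ v : Fin (n+1) → ℝ, ∏ i, f i (v i) ∂(Measure.pi fun _ => volume)
        = ∫⁻ p : ℝ × (Fin n → ℝ), f 0 p.1 * ∏ j : Fin n, f j.succ (p.2 j)
            ∂((volume : Measure ℝ).prod (Measure.pi fun _ => volume)) := by
          rw [← mp.lintegral_comp hF]
          refine lintegral_congr fun v => ?_
          simp [MeasurableEquiv.piFinSuccAbove, Fin.prod_univ_succ, Fin.zero_succAbove, Fin.tail]
      _ = (∫⁻ z, f 0 z) * ∏ j : Fin n, ∫⁻ z, f j.succ z := by
          have h2 := lintegral_prod_mul (μ := (volume : Measure ℝ))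
            (ν := Measure.pi fun _ : Fin n => (volume : Measure ℝ)) (f := f 0)
            (g := fun y => ∏ j : Fin n, f j.succ (y j)) (hf 0).aemeasurable
            (Finset.measurable_prod _ fun j _ =>
              (hf j.succ).comp (measurable_pi_apply j)).aemeasurable
          rw [h2, ih _ fun j => hf j.succ]
      _ = ∏ i, ∫⁻ z, f i z := by rw [Fin.prod_univ_succ]

lemma pi_withDensity (n : ℕ) (g : ℝ → ℝ≥0∞) (hg : Measurable g) (hfin : ∀ z, g z ≠ ∞) :
    Measure.pi (fun _ : Fin n => volume.withDensity g) =
      (Measure.pi fun _ : Fin n => (volume : Measure ℝ)).withDensity fun v => ∏ i, g (v i) := by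
  haveI : SigmaFinite (volume.withDensity g) := SigmaFinite.withDensity_of_ne_top' hfin
  refine Measure.pi_eq (μ := fun _ : Fin n => volume.withDensity g) fun s hs => ?_
  rw [withDensity_apply _ (MeasurableSet.univ_pi hs),
    ← lintegral_indicator (MeasurableSet.univ_pi hs)]
  have hind : ∀ v : Fin n → ℝ, (Set.univ.pi s).indicator (fun v => ∏ i, g (v i)) v
      = ∏ i, (s i).indicator g (v i) := by
    intro v
    by_cases hv : v ∈ Set.univ.pi s
    · rw [Set.indicator_of_mem hv]
      exact Finset.prod_congr rfl fun i _ => (Set.indicator_of_mem (hv i trivial) g).symm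
    · rw [Set.indicator_of_notMem hv]
      rw [Set.mem_univ_pi] at hv
      push_neg at hv
      obtain ⟨i, hi⟩ := hv
      exact (Finset.prod_eq_zero (Finset.mem_univ i)
        (by simp [Set.indicator_of_notMem hi])).symm
  simp_rw [hind]
  rw [lintegral_pi_prod n _ (fun i => hg.indicator (hs i))]
  exact Finset.prod_congr rfl fun i _ => by
    rw [withDensity_apply _ (hs i), ← lintegral_indicator (hs i)]

/-- The density of the exponential distribution with rate `ε`. -/
noncomputable def expDens (ε : ℝ) : ℝ → ℝ≥0∞ := fun z =>
  ENNReal.ofReal (if 0 ≤ z then ε * Real.exp (-(ε * z)) else 0)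

lemma expDens_measurable (ε : ℝ) : Measurable (expDens ε) := by
  refine ENNReal.measurable_ofReal.comp (Measurable.ite measurableSet_Ici ?_ measurable_const)
  exact measurable_const.mul ((measurable_id.const_mul ε).neg.exp)

lemma expDist_eq (ε : ℝ) (hε : 0 < ε) : expDist (1 / ε) = volume.withDensity (expDens ε) := by
  unfold expDist expDens
  congr 1
  funext z
  have h1 : (1:ℝ) / (1 / ε) = ε := one_div_one_div ε
  have h2 : z / (1 / ε) = ε * z := by field_simp
  rw [h1, h2]

lemma expDens_shift {ε : ℝ} (hε : 0 < ε) {s : ℝ} (hs : 0 ≤ s) (z : ℝ) :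
    ENNReal.ofReal (Real.exp (-(ε * s))) * expDens ε z ≤ expDens ε (z + s) := by
  unfold expDens
  by_cases hz : 0 ≤ z
  · have hzs : 0 ≤ z + s := by linarith
    rw [if_pos hz, if_pos hzs, ← ENNReal.ofReal_mul (Real.exp_pos _).le]
    apply le_of_eq
    congr 1
    rw [mul_left_comm, ← Real.exp_add]
    ring_nf
  · rw [if_neg hz]
    simp

lemma haltEvent_measurable (a : ℕ → ℝ) (k : ℕ) : MeasurableSet (haltEvent a k) := by
  have h1 : MeasurableSet {v : Fin (k+1) → ℝ |
      ∀ i : Fin (k+1), 1 ≤ (i : ℕ) → (i : ℕ) < k → a i + v i < v 0} := by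
    have : {v : Fin (k+1) → ℝ | ∀ i : Fin (k+1), 1 ≤ (i : ℕ) → (i : ℕ) < k → a i + v i < v 0}
        = ⋂ i : Fin (k+1), {v | 1 ≤ (i : ℕ) → (i : ℕ) < k → a i + v i < v 0} := by
      ext v; simp [Set.mem_iInter]
    rw [this]
    refine MeasurableSet.iInter fun i => ?_
    by_cases h1 : 1 ≤ (i : ℕ)
    · by_cases h2 : (i : ℕ) < k
      · have : {v : Fin (k+1) → ℝ | 1 ≤ (i : ℕ) → (i : ℕ) < k → a i + v i < v 0}
            = {v | a i + v i < v 0} := by ext v; simp [h1, h2]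
        rw [this]
        exact measurableSet_lt (by fun_prop) (measurable_pi_apply 0)
      · have : {v : Fin (k+1) → ℝ | 1 ≤ (i : ℕ) → (i : ℕ) < k → a i + v i < v 0}
            = Set.univ := by ext v; simp [h2]
        rw [this]; exact MeasurableSet.univ
    · have : {v : Fin (k+1) → ℝ | 1 ≤ (i : ℕ) → (i : ℕ) < k → a i + v i < v 0}
          = Set.univ := by ext v; simp [h1]
      rw [this]; exact MeasurableSet.univ
  have h2 : MeasurableSet {v : Fin (k+1) → ℝ | v 0 ≤ a k + v (Fin.last k)} :=
    measurableSet_le (measurable_pi_apply 0) (by fun_prop)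
  exact h1.inter h2

lemma quantileQuery_cons (β ℓ q u : ℝ) (i : ℕ) (y : Multiset ℝ) :
    quantileQuery β ℓ q i (u ::ₘ y) =
      quantileQuery β ℓ q i y + (if u - ℓ + 1 < β ^ i then 1 else 0) - q := by
  unfold quantileQuery
  rw [Multiset.filter_cons, Multiset.card_add, Multiset.card_cons]
  split_ifs with h <;> · simp only [Multiset.card_singleton, Multiset.card_zero]; push_cast; ring

lemma exists_shift (β ℓ q : ℝ) (hβ : 1 < β) (hq0 : 0 ≤ q) (hq1 : q ≤ 1)
    (x x' : Multiset ℝ)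
    (hneighbor : (∃ u : ℝ, x' = u ::ₘ x) ∨ (∃ u : ℝ, x = u ::ₘ x')) (k : ℕ) :
    ∃ t0 tk : ℝ, 0 ≤ t0 ∧ 0 ≤ tk ∧ t0 + tk ≤ q + 1 ∧
      (∀ i : ℕ, i ≤ k → quantileQuery β ℓ q i x' ≤ quantileQuery β ℓ q i x + t0) ∧
      quantileQuery β ℓ q k x + t0 ≤ quantileQuery β ℓ q k x' + tk := by
  rcases hneighbor with ⟨u, hu⟩ | ⟨u, hu⟩
  · subst hu
    by_cases hIk : u - ℓ + 1 < β ^ k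
    · refine ⟨1 - q, 0, by linarith, le_refl 0, by linarith, ?_, ?_⟩
      · intro i hik
        rw [quantileQuery_cons]
        split_ifs <;> linarith
      · rw [quantileQuery_cons, if_pos hIk]
        linarith
    · refine ⟨0, q, le_refl 0, hq0, by linarith, ?_, ?_⟩
      · intro i hik
        have hIi : ¬ (u - ℓ + 1 < β ^ i) := fun h =>
          hIk (h.trans_le (pow_le_pow_right₀ hβ.le hik))
        rw [quantileQuery_cons, if_neg hIi]
        linarith
      · rw [quantileQuery_cons, if_neg hIk]
        linarith
  · subst hu
    refine ⟨q, if u - ℓ + 1 < β ^ k then 1 else 0, hq0, by split_ifs <;> norm_num,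
      by split_ifs <;> linarith, ?_, ?_⟩
    · intro i hik
      rw [quantileQuery_cons]
      split_ifs <;> linarith
    · rw [quantileQuery_cons]
      split_ifs <;> linarith

end Aux

/-- The unbounded quantile mechanism with exponential noise and `ε₁ = ε₂` is
`(qε₁ + ε₂)`-DP under the add-subtract definition of neighbors. -/
theorem unbounded_quantile_add_subtract_dp (β ℓ q ε ε₁ ε₂ : ℝ) (hβ : 1 < β)
    (hq0 : 0 ≤ q) (hq1 : q ≤ 1) (hε : 0 < ε) (hε₁ : ε₁ = ε) (hε₂ : ε₂ = ε)
    (x x' : Multiset ℝ)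
    (hneighbor : (∃ u : ℝ, x' = u ::ₘ x) ∨ (∃ u : ℝ, x = u ::ₘ x'))
    (k : ℕ) (hk : 1 ≤ k) :
    Measure.pi (fun i : Fin (k + 1) => if i = 0 then expDist (1 / ε₁) else expDist (1 / ε₂))
        (haltEvent (fun i => quantileQuery β ℓ q i x) k) ≤
      ENNReal.ofReal (Real.exp (q * ε₁ + ε₂)) *
        Measure.pi
          (fun i : Fin (k + 1) => if i = 0 then expDist (1 / ε₁) else expDist (1 / ε₂))
          (haltEvent (fun i => quantileQuery β ℓ q i x') k) := by
  rw [hε₁, hε₂]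
  have hfam : (fun i : Fin (k + 1) => if i = 0 then expDist (1 / ε) else expDist (1 / ε))
      = fun _ : Fin (k + 1) => expDist (1 / ε) := funext fun i => by split <;> rfl
  rw [hfam]
  set a : ℕ → ℝ := fun i => quantileQuery β ℓ q i x with ha
  set a' : ℕ → ℝ := fun i => quantileQuery β ℓ q i x' with ha'
  obtain ⟨t0, tk, ht0, htk, hsum, hC1, hC2⟩ :=
    exists_shift β ℓ q hβ hq0 hq1 x x' hneighbor k
  set t : Fin (k + 1) → ℝ := fun i => if i = 0 then t0 else if i = Fin.last k then tk else 0
    with hT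
  have h0last : Fin.last k ≠ (0 : Fin (k + 1)) := by
    simp only [ne_eq, Fin.ext_iff, Fin.val_last, Fin.val_zero]
    omega
  have ht_nonneg : ∀ i, 0 ≤ t i := by
    intro i
    simp only [hT]
    split_ifs with h1 h2
    · exact ht0
    · exact htk
    · exact le_refl 0
  have htsum : ∑ i, t i ≤ q + 1 := by
    have heq : ∀ i : Fin (k + 1),
        t i = (if i = 0 then t0 else 0) + (if i = Fin.last k then tk else 0) := by
      intro i
      simp only [hT]
      split_ifs with h1 h2 <;> first | (subst h1; simp_all) | ring
    rw [Finset.sum_congr rfl fun i _ => heq i, Finset.sum_add_distrib,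
      Finset.sum_ite_eq' Finset.univ (0 : Fin (k + 1)) fun _ => t0,
      Finset.sum_ite_eq' Finset.univ (Fin.last k) fun _ => tk]
    simpa using hsum
  -- inclusion
  have hsub : ∀ v ∈ haltEvent a k, v + t ∈ haltEvent a' k := by
    rintro v ⟨h1, h2⟩
    constructor
    · intro i hi1 hik
      have hi0 : i ≠ 0 := by
        intro h; subst h; simp at hi1
      have hil : i ≠ Fin.last k := by
        intro h; subst h; simp at hik
      have hti : t i = 0 := by simp only [hT, if_neg hi0, if_neg hil]
      have ht00 : t 0 = t0 := by simp only [hT, if_pos rfl]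
      have hlt := h1 i hi1 hik
      have hle := hC1 i (le_of_lt hik)
      simp only [Pi.add_apply, hti, ht00]
      linarith
    · have htl : t (Fin.last k) = tk := by simp [hT, h0last]
      have ht00 : t 0 = t0 := by simp only [hT, if_pos rfl]
      simp only [Pi.add_apply, htl, ht00]
      linarith [h2]
  -- measure computation
  have hgmeas := expDens_measurable ε
  have hgfin : ∀ z, expDens ε z ≠ ⊤ := fun z => ENNReal.ofReal_ne_top
  rw [expDist_eq ε hε, pi_withDensity _ _ hgmeas hgfin]
  set G : (Fin (k + 1) → ℝ) → ℝ≥0∞ := fun v => ∏ i, expDens ε (v i) with hG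
  have hGmeas : Measurable G :=
    Finset.measurable_prod _ fun i _ => hgmeas.comp (measurable_pi_apply i)
  have hE : MeasurableSet (haltEvent a k) := haltEvent_measurable a k
  have hE' : MeasurableSet (haltEvent a' k) := haltEvent_measurable a' k
  rw [withDensity_apply _ hE, withDensity_apply _ hE', ← lintegral_indicator hE,
    ← lintegral_indicator hE']
  set c : ℝ≥0∞ := ENNReal.ofReal (Real.exp (q * ε + ε)) with hc
  have hpt : ∀ v, (haltEvent a k).indicator G v ≤ c * (haltEvent a' k).indicator G (v + t) := by
    intro v
    by_cases hv : v ∈ haltEvent a k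
    · rw [Set.indicator_of_mem hv, Set.indicator_of_mem (hsub v hv)]
      have key : ENNReal.ofReal (Real.exp (-(ε * (q + 1)))) * G v ≤ G (v + t) :=
        calc ENNReal.ofReal (Real.exp (-(ε * (q + 1)))) * G v
            ≤ ENNReal.ofReal (Real.exp (-(ε * ∑ i, t i))) * G v := by
              refine mul_le_mul_left (ENNReal.ofReal_le_ofReal (Real.exp_le_exp.mpr ?_)) _
              nlinarith [htsum, hε.le, mul_le_mul_of_nonneg_left htsum hε.le]
          _ = ∏ i, (ENNReal.ofReal (Real.exp (-(ε * t i))) * expDens ε (v i)) := by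
              rw [Finset.prod_mul_distrib,
                ← ENNReal.ofReal_prod_of_nonneg (fun _ _ => (Real.exp_pos _).le),
                ← Real.exp_sum]
              congr 3
              rw [Finset.mul_sum, ← Finset.sum_neg_distrib]
          _ ≤ ∏ i, expDens ε ((v + t) i) :=
              Finset.prod_le_prod' fun i _ => expDens_shift hε (ht_nonneg i) (v i)
          _ = G (v + t) := rfl
      calc G v
          = (c * ENNReal.ofReal (Real.exp (-(ε * (q + 1))))) * G v := by
            rw [hc, ← ENNReal.ofReal_mul (Real.exp_pos _).le, ← Real.exp_add,
              show q * ε + ε + -(ε * (q + 1)) = 0 by ring, Real.exp_zero,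
              ENNReal.ofReal_one, one_mul]
        _ = c * (ENNReal.ofReal (Real.exp (-(ε * (q + 1)))) * G v) := by rw [mul_assoc]
        _ ≤ c * G (v + t) := mul_le_mul_right key c
    · rw [Set.indicator_of_notMem hv]
      exact zero_le
  calc ∫⁻ v, (haltEvent a k).indicator G v ∂(Measure.pi fun _ : Fin (k + 1) => volume)
      ≤ ∫⁻ v, c * (haltEvent a' k).indicator G (v + t)
          ∂(Measure.pi fun _ : Fin (k + 1) => volume) := lintegral_mono hpt
    _ = c * ∫⁻ v, (haltEvent a' k).indicator G (v + t)
          ∂(Measure.pi fun _ : Fin (k + 1) => volume) :=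
        lintegral_const_mul c ((hGmeas.indicator hE').comp (measurable_add_const t))
    _ = c * ∫⁻ v, (haltEvent a' k).indicator G v
          ∂(Measure.pi fun _ : Fin (k + 1) => volume) := by
        rw [lintegral_add_right_eq_self (fun v => (haltEvent a' k).indicator G v) t]
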